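/- Let C be a complete lattice and let f : C → ℘∨(C) be an H-monotone multivalued function (each value f(c) contains its supremum). Then f has a greatest fixed point, i.e., Fix(f) = {x ∈ C : x ∈ f(x)} has a greatest element; moreover, gfp(f) = ⋀_{α ∈ Ord} f∨^α(⊤), where f∨(c) = ⋁ f(c) and f∨^α denotes the α-th transfinite iterate (with infima taken at limit stages) of f∨ starting from the top element ⊤ of C. -/

import Mathlib

universe u

/-- Hoare preorder on subsets: `X ⪯_H Y` iff every `x ∈ X` is below some `y ∈ Y`. -/
def HoareLE {β : Type u} [LE β] (X Y : Set β) : Prop := ∀ x ∈ X, ∃ y ∈ Y, x ≤ y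

/-- Downward transfinite iterates of `g` starting from `⊤`:
`g^0 = ⊤`, `g^(β+1) = g (g^β)`, and infima are taken at limit ordinals. -/
noncomputable def downIter {β : Type u} [CompleteLattice β] (g : β → β) (o : Ordinal.{u}) : β :=
  Ordinal.limitRecOn (motive := fun _ => β) o ⊤ (fun _ ih => g ih)
    (fun o _ ih => ⨅ b : Set.Iio o, ih b.1 b.2)

/-! The join map `c ↦ ⋁ f c` is monotone, so by Tarski it has a greatest fixed point, which its
downward iterates from `⊤` reach (Mathlib's `OrdinalApprox.gfpApprox`). Since `⋁ f c ∈ f c`, a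
fixed point of the join map is a fixed point of `f`; conversely `x ∈ f x` gives `x ≤ ⋁ f x`, so
every fixed point of `f` is a post-fixed point of the join map and lies below its gfp. -/

theorem HoareLE.sSup_le_sSup {β : Type u} [CompleteLattice β] {X Y : Set β}
    (h : HoareLE X Y) : sSup X ≤ sSup Y :=
  sSup_le fun x hx => let ⟨_, hy, hxy⟩ := h x hx; hxy.trans (le_sSup hy)

section downIter

variable {β : Type u} [CompleteLattice β]

theorem downIter_zero (g : β → β) : downIter g 0 = ⊤ :=
  Ordinal.limitRecOn_zero _ _ _

theorem downIter_add_one (g : β → β) (o : Ordinal.{u}) :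
    downIter g (o + 1) = g (downIter g o) :=
  Ordinal.limitRecOn_add_one _ _ _ _

theorem downIter_of_isSuccLimit (g : β → β) {o : Ordinal.{u}} (h : Order.IsSuccLimit o) :
    downIter g o = ⨅ b : Set.Iio o, downIter g b.1 :=
  Ordinal.limitRecOn_limit _ _ _ _ h

theorem downIter_eq_gfpApprox (g : β →o β) : downIter g = OrdinalApprox.gfpApprox g ⊤ := by
  funext o
  induction o using Ordinal.limitRecOn with
  | zero => rw [downIter_zero, OrdinalApprox.gfpApprox_zero]
  | add_one o ih => rw [downIter_add_one, OrdinalApprox.gfpApprox_add_one g le_top, ih]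
  | limit o ho ih =>
    rw [downIter_of_isSuccLimit g ho, OrdinalApprox.gfpApprox_of_isSuccLimit g ho]
    exact iInf_congr fun b => ih b.1 b.2

theorem iInf_downIter_eq_gfp (g : β →o β) : ⨅ o : Ordinal.{u}, downIter g o = g.gfp := by
  obtain ⟨a, ha⟩ := OrdinalApprox.gfp_mem_range_gfpApprox g
  have hfixed : OrdinalApprox.gfpApprox g ⊤ a ∈ Function.fixedPoints g := by
    rw [ha]; exact g.map_gfp
  rw [downIter_eq_gfpApprox, OrdinalApprox.iInf_gfpApprox_eq_of_mem_fixedPoints g hfixed, ha]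

end downIter

/-- an H-monotone multivalued function `f : C → ℘∨(C)` on a complete
lattice has a greatest fixed point, namely `⋀_{α ∈ Ord} f∨^α(⊤)` where `f∨ c = ⋁ f c`. -/
theorem multivalued_gfp {β : Type u} [CompleteLattice β] (f : β → Set β)
    (hjoin : ∀ c, sSup (f c) ∈ f c)
    (hmono : ∀ x y : β, x ≤ y → HoareLE (f x) (f y)) :
    IsGreatest {x | x ∈ f x} (⨅ o : Ordinal.{u}, downIter (fun c => sSup (f c)) o) := by
  let join : β →o β := ⟨fun c => sSup (f c), fun x y hxy => (hmono x y hxy).sSup_le_sSup⟩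
  change IsGreatest _ (⨅ o : Ordinal.{u}, downIter join o)
  rw [iInf_downIter_eq_gfp]
  refine ⟨?_, fun x hx => join.le_gfp (le_sSup hx)⟩
  have hfixed : sSup (f join.gfp) = join.gfp := join.map_gfp
  simpa only [Set.mem_ofPred_eq, hfixed] using hjoin join.gfp
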